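/- Let (X,f) be a dynamical system with X a compact metric space and f : X → X continuous, and let A ⊆ X be a closed set with f(A) ⊆ A which contains the measure center of f. Then for every ε > 0 there is δ with 0 < δ < ε such that for every δ-average-pseudo-orbit {x_n}_{n≥0} of f there is a sequence {y_n}_{n≥0} contained in A which is an ε-average-pseudo-orbit of f and satisfies limsup_{n→∞} (1/n)·#{0 ≤ i < n : d(x_i, y_i) ≥ ε} < ε. -/

import Mathlib

open Filter Metric Set MeasureTheory Topology

section Defs

variable {X : Type*} [MetricSpace X]

/-- The Bowen ball of radius `ε` centered at `x` along a finite set of times `Λ`. -/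
def bowenBallAlong (f : X → X) (Λ : Finset ℕ) (x : X) (ε : ℝ) : Set X :=
  {y | ∀ j ∈ Λ, dist (f^[j] x) (f^[j] y) < ε}

/-- `g` is a mistake function with threshold `ε₀`. -/
structure IsMistakeFun (g : ℕ → ℝ → ℕ) (ε₀ : ℝ) : Prop where
  pos : 0 < ε₀
  mono : ∀ n : ℕ, ∀ ε : ℝ, 0 < ε → ε ≤ ε₀ → g n ε ≤ g (n + 1) ε
  small : ∀ ε : ℝ, 0 < ε → ε ≤ ε₀ →
    Tendsto (fun n : ℕ => (g n ε : ℝ) / n) atTop (nhds 0)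
  ext : ∀ n : ℕ, ∀ ε : ℝ, ε₀ < ε → g n ε = g n ε₀

/-- The `(g;n,ε)`-Bowen ball `B_n(g;x,ε)`: union of Bowen balls along all
`Λ ⊆ {0,…,n-1}` with `#Λ ≥ n - g(n,ε)`. -/
def mistakeBowenBall (f : X → X) (g : ℕ → ℝ → ℕ) (n : ℕ) (x : X) (ε : ℝ) : Set X :=
  ⋃ Λ ∈ {Λ : Finset ℕ | Λ ⊆ Finset.range n ∧ n - g n ε ≤ Λ.card},
    bowenBallAlong f Λ x ε

/-- Almost specification property with given mistake function `g` and gap function `kg`. -/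
def AlmostSpecWith (f : X → X) (g : ℕ → ℝ → ℕ) (kg : ℝ → ℕ) : Prop :=
  ∀ m : ℕ, 1 ≤ m → ∀ (ε : ℕ → ℝ) (x : ℕ → X) (nseq : ℕ → ℕ),
    (∀ j, 1 ≤ j → j ≤ m → 0 < ε j) →
    (∀ j, 1 ≤ j → j ≤ m → kg (ε j) ≤ nseq j) →
    ∃ z : X, ∀ j, 1 ≤ j → j ≤ m →
      f^[∑ s ∈ Finset.Ico 1 j, nseq s] z ∈ mistakeBowenBall f g (nseq j) (x j) (ε j)

/-- The almost specification property. -/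
def AlmostSpec (f : X → X) : Prop :=
  ∃ (g : ℕ → ℝ → ℕ) (ε₀ : ℝ) (kg : ℝ → ℕ),
    IsMistakeFun g ε₀ ∧ AlmostSpecWith f g kg

/-- `{x_n}` is a `δ`-average-pseudo-orbit of `f`. -/
def AvgPseudoOrbit (f : X → X) (δ : ℝ) (x : ℕ → X) : Prop :=
  ∃ N : ℕ, 0 < N ∧ ∀ n : ℕ, N ≤ n → ∀ k : ℕ,
    (∑ i ∈ Finset.range n, dist (f (x (i + k))) (x (i + k + 1))) / n < δ

/-- `{x_n}` is `ε`-shadowed in average by `y`. -/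
def ShadowedInAvg (f : X → X) (ε : ℝ) (x : ℕ → X) (y : X) : Prop :=
  limsup (fun n : ℕ => (∑ i ∈ Finset.range n, dist (f^[i] y) (x i)) / n) atTop < ε

/-- The average shadowing property. -/
def AvgShadowing (f : X → X) : Prop :=
  ∀ ε : ℝ, 0 < ε → ∃ δ : ℝ, 0 < δ ∧
    ∀ x : ℕ → X, AvgPseudoOrbit f δ x → ∃ y : X, ShadowedInAvg f ε x y

/-- `{x_n}` is an asymptotic average pseudo-orbit of `f`. -/
def AsympAvgPseudoOrbit (f : X → X) (x : ℕ → X) : Prop :=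
  Tendsto (fun n : ℕ => (∑ i ∈ Finset.range n, dist (f (x i)) (x (i + 1))) / n)
    atTop (nhds 0)

/-- `{x_n}` is asymptotically shadowed in average by `y`. -/
def AsympShadowedInAvg (f : X → X) (x : ℕ → X) (y : X) : Prop :=
  Tendsto (fun n : ℕ => (∑ i ∈ Finset.range n, dist (f^[i] y) (x i)) / n)
    atTop (nhds 0)

/-- The asymptotic average shadowing property. -/
def AsympAvgShadowing (f : X → X) : Prop :=
  ∀ x : ℕ → X, AsympAvgPseudoOrbit f x → ∃ y : X, AsympShadowedInAvg f x y

/-- An infinite `δ`-pseudo-orbit. -/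
def PseudoOrbit (f : X → X) (δ : ℝ) (x : ℕ → X) : Prop :=
  ∀ i : ℕ, dist (f (x i)) (x (i + 1)) < δ

/-- There exists a finite `δ`-pseudo-orbit of length `n` from `x` to `y`. -/
def FinChain (f : X → X) (δ : ℝ) (n : ℕ) (x y : X) : Prop :=
  ∃ c : ℕ → X, c 0 = x ∧ c n = y ∧ ∀ i < n, dist (f (c i)) (c (i + 1)) < δ

/-- Chain transitivity. -/
def ChainTransitive (f : X → X) : Prop :=
  ∀ δ : ℝ, 0 < δ → ∀ x y : X, ∃ n : ℕ, 0 < n ∧ FinChain f δ n x y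

/-- Chain mixing. -/
def ChainMixing (f : X → X) : Prop :=
  ∀ δ : ℝ, 0 < δ → ∀ x y : X, ∃ N : ℕ, 0 < N ∧ ∀ n : ℕ, N ≤ n → FinChain f δ n x y

/-- The shadowing property. -/
def Shadowing (f : X → X) : Prop :=
  ∀ ε : ℝ, 0 < ε → ∃ δ : ℝ, 0 < δ ∧
    ∀ x : ℕ → X, PseudoOrbit f δ x → ∃ z : X, ∀ i : ℕ, dist (f^[i] z) (x i) < ε

/-- The limit shadowing property. -/
def LimitShadowing (f : X → X) : Prop :=
  ∀ x : ℕ → X, Tendsto (fun i : ℕ => dist (f (x i)) (x (i + 1))) atTop (nhds 0) →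
    ∃ z : X, Tendsto (fun i : ℕ => dist (f^[i] z) (x i)) atTop (nhds 0)

/-- Topological transitivity. -/
def TopTransitive {Y : Type*} [TopologicalSpace Y] (f : Y → Y) : Prop :=
  ∀ U V : Set Y, IsOpen U → IsOpen V → U.Nonempty → V.Nonempty →
    ∃ n : ℕ, 0 < n ∧ (f^[n] '' U ∩ V).Nonempty

/-- Total transitivity. -/
def TotallyTransitive {Y : Type*} [TopologicalSpace Y] (f : Y → Y) : Prop :=
  ∀ n : ℕ, 1 ≤ n → TopTransitive f^[n]

/-- Topological weak mixing: `f × f` is transitive. -/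
def WeaklyMixing {Y : Type*} [TopologicalSpace Y] (f : Y → Y) : Prop :=
  TopTransitive (Prod.map f f)

/-- Topological mixing. -/
def TopMixing {Y : Type*} [TopologicalSpace Y] (f : Y → Y) : Prop :=
  ∀ U V : Set Y, IsOpen U → IsOpen V → U.Nonempty → V.Nonempty →
    ∃ N : ℕ, 0 < N ∧ ∀ n : ℕ, N ≤ n → (f^[n] '' U ∩ V).Nonempty

/-- The forward orbit of a point. -/
def fOrbit (f : X → X) (x : X) : Set X := Set.range fun n : ℕ => f^[n] x

/-- `x` is a minimal point of `f`: every point of the orbit closure of `x`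
has orbit dense in that orbit closure. -/
def MinimalPoint (f : X → X) (x : X) : Prop :=
  ∀ y ∈ closure (fOrbit f x), closure (fOrbit f x) ⊆ closure (fOrbit f y)

variable [MeasurableSpace X]

/-- `μ` is an `f`-invariant Borel probability measure. -/
def InvariantProb (f : X → X) (μ : Measure X) : Prop :=
  IsProbabilityMeasure μ ∧ ∀ B : Set X, MeasurableSet B → μ (f ⁻¹' B) = μ B

/-- A set is universally null if it has measure zero for every invariant
probability measure. -/
def UnivNull (f : X → X) (U : Set X) : Prop :=
  ∀ μ : Measure X, InvariantProb f μ → μ U = 0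

/-- The measure center: complement of the union of all universally null open sets. -/
def measureCenter (f : X → X) : Set X :=
  (⋃ U ∈ {U : Set X | IsOpen U ∧ UnivNull f U}, U)ᶜ

/-- `μ` has full support. -/
def FullSupport (μ : Measure X) : Prop :=
  ∀ U : Set X, IsOpen U → U.Nonempty → 0 < μ U

end Defs

section Visits

variable {X : Type*} [MetricSpace X]

/-- The set of visiting times `N(x,U)`. -/
def visitTimes (f : X → X) (x : X) (U : Set X) : Set ℕ :=
  {n : ℕ | 0 < n ∧ f^[n] x ∈ U}

/-- `η(n,U) = max_{x ∈ X} #(N(x,U) ∩ {0,…,n-1})`. -/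
noncomputable def eta (f : X → X) (U : Set X) (n : ℕ) : ℕ :=
  sSup {k : ℕ | ∃ x : X, k = (visitTimes f x U ∩ Set.Iio n).ncard}

/-- The visit frequency `ξ(U) = inf_{n>0} η(n,U)/n`. -/
noncomputable def xi (f : X → X) (U : Set X) : ℝ :=
  ⨅ n : ℕ, (eta f U (n + 1) : ℝ) / (n + 1)

/-- `J ⊆ ℕ` has asymptotic density `a`. -/
def HasDensity (J : Set ℕ) (a : ℝ) : Prop :=
  Tendsto (fun n : ℕ => ((J ∩ Set.Iio n).ncard : ℝ) / n) atTop (nhds a)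

/-- Upper asymptotic density of a set of naturals. -/
noncomputable def upperDensity (J : Set ℕ) : ℝ :=
  limsup (fun n : ℕ => ((J ∩ Set.Iio n).ncard : ℝ) / n) atTop

end Visits


/-!
If `δ`-average-pseudo-orbits could spend a fraction `θ > 0` of their time in a closed set `K`
disjoint from the measure center, the empirical measures of longer and longer such orbit
segments would accumulate, by weak-* compactness, on a probability measure giving `K` mass at
least `θ`. This measure is `f`-invariant, because the average jump `d(f(xᵢ), xᵢ₊₁)` tends to zero,
so it must vanish on `K`, which is covered by finitely many universally null open sets.

Taking for `K` the set of points at distance at least `ρ` from `A`, an average pseudo-orbit is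
therefore `ρ`-close to `A` outside a set of times of small density, uniformly over all windows.
Replacing each `xᵢ` by a nearby point of `A` (by an arbitrary point of `A` at the exceptional
times) gives `y`: uniform continuity of `f` controls its jumps at ordinary times and the diameter
of `X` controls them at the few exceptional ones.
-/

open Finset
open scoped ENNReal

lemma ncard_setOf_lt_and_eq_card_filter (P : ℕ → Prop) [DecidablePred P] (n : ℕ) :
    {i | i < n ∧ P i}.ncard = #{i ∈ range n | P i} := by
  rw [← ncard_coe_finset]
  congr
  ext
  simp

namespace MeasureTheory

variable {X : Type*} [MeasurableSpace X]

noncomputable def empiricalMeasure (z : ℕ → X) (n : ℕ) : Measure X :=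
  (n : ℝ≥0∞)⁻¹ • ∑ i ∈ range n, Measure.dirac (z i)

lemma isProbabilityMeasure_empiricalMeasure (z : ℕ → X) {n : ℕ} (hn : n ≠ 0) :
    IsProbabilityMeasure (empiricalMeasure z n) := by
  constructor
  simp [empiricalMeasure, ENNReal.inv_mul_cancel (Nat.cast_ne_zero.2 hn) (ENNReal.natCast_ne_top n)]

lemma empiricalMeasure_real_apply (z : ℕ → X) (n : ℕ) {s : Set X} (hs : MeasurableSet s) :
    (empiricalMeasure z n).real s = ({i | i < n ∧ z i ∈ s}.ncard : ℝ) / n := by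
  classical
  simp [empiricalMeasure, measureReal_def, Measure.dirac_apply' _ hs, Set.indicator_apply,
    ncard_setOf_lt_and_eq_card_filter, ENNReal.toReal_inv, div_eq_inv_mul]

lemma integral_empiricalMeasure [MeasurableSingletonClass X] (z : ℕ → X) (n : ℕ) (g : X → ℝ) :
    ∫ x, g x ∂empiricalMeasure z n = (∑ i ∈ range n, g (z i)) / n := by
  rw [empiricalMeasure, integral_smul_measure,
    integral_finsetSum_measure fun i _ => integrable_dirac (by simp)]
  simp [integral_dirac, div_eq_inv_mul]

end MeasureTheory

section Averages

variable {ι : Type*} {l : Filter ι}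

lemma tendsto_sum_range_sub_div {u : ι → ℕ → ℝ} {D : ℝ} (hD : ∀ m i j, |u m i - u m j| ≤ D)
    {n : ι → ℕ} (hn : Tendsto n l atTop) :
    Tendsto (fun m => (∑ i ∈ range (n m), (u m (i + 1) - u m i)) / n m) l (𝓝 0) := by
  refine squeeze_zero_norm (fun m => ?_) ((tendsto_const_div_atTop_nhds_zero_nat D).comp hn)
  rw [sum_range_sub, norm_div, Real.norm_natCast]
  exact div_le_div_of_nonneg_right (hD _ _ _) (Nat.cast_nonneg _)

variable {X : Type*} [PseudoMetricSpace X]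

lemma UniformContinuous.exists_dist_le_add_mul_dist {g : X → ℝ} (hg : UniformContinuous g)
    {D : ℝ} (hD : ∀ a b, dist (g a) (g b) ≤ D) {r : ℝ} (hr : 0 < r) :
    ∃ C, ∀ a b, dist (g a) (g b) ≤ r + C * dist a b := by
  obtain ⟨s, hs, hgs⟩ := Metric.uniformContinuous_iff.1 hg r hr
  refine ⟨D / s, fun a b => ?_⟩
  have hD0 : 0 ≤ D := dist_nonneg.trans (hD a a)
  rcases lt_or_ge (dist a b) s with hab | hab
  · linarith [hgs hab, mul_nonneg (div_nonneg hD0 hs.le) (dist_nonneg (x := a) (y := b))]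
  · calc dist (g a) (g b) ≤ D / s * s := by rw [div_mul_cancel₀ _ hs.ne']; exact hD a b
      _ ≤ r + D / s * dist a b := by nlinarith [div_nonneg hD0 hs.le]

lemma UniformContinuous.tendsto_avg_sub_of_tendsto_avg_dist {g : X → ℝ}
    (hg : UniformContinuous g) {D : ℝ} (hD : ∀ a b, dist (g a) (g b) ≤ D)
    {a b : ι → ℕ → X} {n : ι → ℕ}
    (h : Tendsto (fun m => (∑ i ∈ range (n m), dist (a m i) (b m i)) / n m) l (𝓝 0)) :
    Tendsto (fun m => (∑ i ∈ range (n m), (g (a m i) - g (b m i))) / n m) l (𝓝 0) := by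
  refine Metric.tendsto_nhds.2 fun r hr => ?_
  obtain ⟨C, hC⟩ := hg.exists_dist_le_add_mul_dist hD (half_pos hr)
  have hCh := h.const_mul C
  rw [mul_zero] at hCh
  filter_upwards [hCh.eventually (gt_mem_nhds (half_pos hr))] with m hm
  have hsum : |∑ i ∈ range (n m), (g (a m i) - g (b m i))|
      ≤ n m * (r / 2) + C * ∑ i ∈ range (n m), dist (a m i) (b m i) := by
    calc _ ≤ ∑ i ∈ range (n m), (r / 2 + C * dist (a m i) (b m i)) :=
          (abs_sum_le_sum_abs _ _).trans (sum_le_sum fun i _ => hC _ _)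
      _ = _ := by rw [sum_add_distrib, sum_const, card_range, nsmul_eq_mul, mul_sum]
  rcases (n m).eq_zero_or_pos with h0 | h0
  · simpa [h0] using hr
  rw [Real.dist_0_eq_abs, abs_div, Nat.abs_cast, div_lt_iff₀ (by positivity)]
  rw [mul_div_assoc', div_lt_iff₀ (by positivity)] at hm
  nlinarith

end Averages

section InvariantMeasures

variable {X : Type*} [MetricSpace X] [MeasurableSpace X] {f : X → X}

lemma IsCompact.univNull_of_disjoint_measureCenter {K : Set X} (hK : IsCompact K)
    (hKf : Disjoint K (measureCenter f)) : UnivNull f K := by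
  intro μ hμ
  obtain ⟨t, ht, htfin, hKt⟩ := hK.elim_finite_subcover_image (fun U hU => hU.1)
    (Set.disjoint_compl_right_iff_subset.1 hKf)
  exact measure_mono_null hKt <|
    (measure_biUnion_null_iff htfin.countable).2 fun U hU => (ht hU).2 μ hμ

variable [BorelSpace X]

lemma invariantProb_of_map_eq (hf : Continuous f) {μ : Measure X} [IsProbabilityMeasure μ]
    (hμ : μ.map f = μ) : InvariantProb f μ :=
  ⟨‹_›, fun B hB => by rw [← Measure.map_apply hf.measurable hB, hμ]⟩

variable [CompactSpace X]

theorem map_eq_of_tendsto_empiricalMeasure (hf : Continuous f) {ι : Type*} {l : Filter ι}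
    [l.NeBot] {z : ι → ℕ → X} {n : ι → ℕ} (hn : Tendsto n l atTop)
    (hz : Tendsto (fun m => (∑ i ∈ range (n m), dist (f (z m i)) (z m (i + 1))) / n m) l (𝓝 0))
    {ν : ι → ProbabilityMeasure X} (hν : ∀ m, (ν m : Measure X) = empiricalMeasure (z m) (n m))
    {μ : ProbabilityMeasure X} (hμ : Tendsto ν l (𝓝 μ)) :
    (μ : Measure X).map f = μ := by
  refine ext_of_forall_integral_eq_of_IsFiniteMeasure fun g => ?_
  rw [integral_map hf.aemeasurable g.continuous.aestronglyMeasurable]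
  obtain ⟨D, hD⟩ := g.map_bounded'
  have hgf := ProbabilityMeasure.tendsto_iff_forall_integral_tendsto.1 hμ
    (g.compContinuous ⟨f, hf⟩)
  have hg := ProbabilityMeasure.tendsto_iff_forall_integral_tendsto.1 hμ g
  -- `g ∘ f - g` splits into the jumps `g (f (z i)) - g (z (i + 1))` and a telescoping sum.
  have hjump := UniformContinuous.tendsto_avg_sub_of_tendsto_avg_dist
    (CompactSpace.uniformContinuous_of_continuous g.continuous) hD hz
  have hshift := tendsto_sum_range_sub_div (u := fun m i => g (z m i))
    (fun m i j => (Real.dist_eq _ _).symm.le.trans (hD _ _)) hn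
  have hdiff : Tendsto (fun m => ∫ x, g (f x) ∂(ν m : Measure X) - ∫ x, g x ∂(ν m : Measure X))
      l (𝓝 0) := by
    simpa [hν, integral_empiricalMeasure, ← sub_div, ← sum_sub_distrib, ← add_div,
      ← sum_add_distrib] using hjump.add hshift
  exact sub_eq_zero.1 (tendsto_nhds_unique (hgf.sub hg) hdiff)

theorem exists_invariantProb_of_tendsto_avg_dist (hf : Continuous f) {z : ℕ → ℕ → X}
    {n : ℕ → ℕ} (hn0 : ∀ m, 0 < n m) (hn : Tendsto n atTop atTop)
    (hz : Tendsto (fun m => (∑ i ∈ range (n m), dist (f (z m i)) (z m (i + 1))) / n m)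
      atTop (𝓝 0)) :
    ∃ μ : Measure X, InvariantProb f μ ∧ ∀ K, IsClosed K → ∀ θ : ℝ,
      (∀ m, θ * n m ≤ {i | i < n m ∧ z m i ∈ K}.ncard) → ENNReal.ofReal θ ≤ μ K := by
  let ν : ℕ → ProbabilityMeasure X := fun m =>
    ⟨empiricalMeasure (z m) (n m), isProbabilityMeasure_empiricalMeasure _ (hn0 m).ne'⟩
  let 𝒰 := Ultrafilter.of (atTop : Filter ℕ)
  have h𝒰 : (𝒰 : Filter ℕ) ≤ atTop := Ultrafilter.of_le _
  have hμ : Tendsto ν 𝒰 (𝓝 (𝒰.map ν).lim) := (𝒰.map ν).le_nhds_lim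
  refine ⟨_, invariantProb_of_map_eq hf <| map_eq_of_tendsto_empiricalMeasure hf
    (hn.mono_left h𝒰) (hz.mono_left h𝒰) (fun _ => rfl) hμ, fun K hK θ hθ => ?_⟩
  refine le_trans (le_limsup_of_frequently_le' (Frequently.of_forall fun m => ?_))
    (ProbabilityMeasure.limsup_measure_closed_le_of_tendsto hμ hK)
  rw [← ofReal_measureReal]
  refine ENNReal.ofReal_le_ofReal ?_
  change θ ≤ (empiricalMeasure (z m) (n m)).real K
  rw [empiricalMeasure_real_apply _ _ hK.measurableSet, le_div_iff₀ (by exact_mod_cast hn0 m)]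
  exact hθ m

theorem exists_ncard_visits_le_of_disjoint_measureCenter (hf : Continuous f) {K : Set X}
    (hK : IsClosed K) (hKf : Disjoint K (measureCenter f)) {θ : ℝ} (hθ : 0 < θ) :
    ∃ δ > 0, ∃ M : ℕ, ∀ (z : ℕ → X) (n : ℕ), M ≤ n →
      ∑ i ∈ range n, dist (f (z i)) (z (i + 1)) < δ * n →
        ({i | i < n ∧ z i ∈ K}.ncard : ℝ) ≤ θ * n := by
  by_contra! H
  choose z n hMn hsum hcount using fun m : ℕ => H (1 / (m + 1)) (by positivity) (m + 1)
  have hn0 : ∀ m, 0 < n m := fun m => m.succ_pos.trans_le (hMn m)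
  have hz : Tendsto (fun m => (∑ i ∈ range (n m), dist (f (z m i)) (z m (i + 1))) / n m)
      atTop (𝓝 0) := by
    refine squeeze_zero (fun m => by positivity) (fun m => ?_)
      tendsto_one_div_add_atTop_nhds_zero_nat
    exact (div_lt_iff₀ (by exact_mod_cast hn0 m)).2 (hsum m) |>.le
  obtain ⟨μ, hμ, hμK⟩ := exists_invariantProb_of_tendsto_avg_dist hf hn0
    (tendsto_atTop_mono hMn (tendsto_add_atTop_nat 1)) hz
  have := hμK K hK θ fun m => (hcount m).le
  rw [hK.isCompact.univNull_of_disjoint_measureCenter hKf μ hμ] at this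
  exact (ENNReal.ofReal_pos.2 hθ).not_ge this

theorem exists_avgPseudoOrbit_ncard_visits_le (hf : Continuous f) {K : Set X} (hK : IsClosed K)
    (hKf : Disjoint K (measureCenter f)) {θ : ℝ} (hθ : 0 < θ) :
    ∃ δ > 0, ∀ x : ℕ → X, AvgPseudoOrbit f δ x →
      ∃ N, ∀ n ≥ N, ∀ k, ({i | i < n ∧ x (i + k) ∈ K}.ncard : ℝ) ≤ θ * n := by
  obtain ⟨δ, hδ, M, hM⟩ := exists_ncard_visits_le_of_disjoint_measureCenter hf hK hKf hθ
  refine ⟨δ, hδ, fun x ⟨N, hN0, hx⟩ => ⟨max M N, fun n hn k => ?_⟩⟩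
  have hn0 : (0 : ℝ) < n := by exact_mod_cast hN0.trans_le (le_of_max_le_right hn)
  refine hM (fun i => x (i + k)) n (le_of_max_le_left hn) ?_
  simpa only [add_right_comm _ 1 k] using (div_lt_iff₀ hn0).1 (hx n (le_of_max_le_right hn) k)

end InvariantMeasures

section Density

lemma exists_not_of_ncard_le {Q : ℕ → Prop} {θ : ℝ} (hθ : θ < 1)
    (h : ∃ N, ∀ n ≥ N, ({i | i < n ∧ Q i}.ncard : ℝ) ≤ θ * n) : ∃ i, ¬ Q i := by
  classical
  by_contra! hQ
  obtain ⟨N, hN⟩ := h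
  have := hN (N + 1) N.le_succ
  rw [ncard_setOf_lt_and_eq_card_filter, filter_true_of_mem fun i _ => hQ i, card_range] at this
  have : (0 : ℝ) < N + 1 := by positivity
  push_cast at *
  nlinarith

lemma limsup_ncard_div_le {P Q : ℕ → Prop} (hPQ : ∀ i, P i → Q i) {θ : ℝ}
    (h : ∃ N, ∀ n ≥ N, ({i | i < n ∧ Q i}.ncard : ℝ) ≤ θ * n) :
    limsup (fun n : ℕ => ({i | i < n ∧ P i}.ncard : ℝ) / n) atTop ≤ θ := by
  obtain ⟨N, hN⟩ := h
  refine limsup_le_of_le (isCoboundedUnder_le_of_le atTop fun n => by positivity) ?_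
  filter_upwards [eventually_ge_atTop (max N 1)] with n hn
  have hn0 : (0 : ℝ) < n := by exact_mod_cast (le_of_max_le_right hn)
  rw [div_le_iff₀ hn0]
  refine le_trans ?_ (hN n (le_of_max_le_left hn))
  have hsub : {i | i < n ∧ P i} ⊆ {i | i < n ∧ Q i} := fun i hi => ⟨hi.1, hPQ i hi.2⟩
  exact_mod_cast Set.ncard_le_ncard hsub ((Set.finite_Iio n).subset fun i hi => hi.1)

end Density

section PseudoOrbits

variable {X : Type*} [MetricSpace X] {f : X → X}

lemma AvgPseudoOrbit.mono {δ δ' : ℝ} {x : ℕ → X} (hx : AvgPseudoOrbit f δ x) (h : δ ≤ δ') :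
    AvgPseudoOrbit f δ' x :=
  let ⟨N, hN, hx⟩ := hx
  ⟨N, hN, fun n hn k => (hx n hn k).trans_le h⟩

theorem AvgPseudoOrbit.of_dist_le_off_sparse {x y : ℕ → X} {B : Set X} {δ σ θ D : ℝ}
    (hx : AvgPseudoOrbit f δ x)
    (hB : ∃ N, ∀ n ≥ N, ∀ k, ({i | i < n ∧ x (i + k) ∈ B}.ncard : ℝ) ≤ θ * n)
    (hD : ∀ a b : X, dist a b ≤ D) (hσ : 0 ≤ σ)
    (hxy : ∀ j, x j ∉ B → x (j + 1) ∉ B →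
      dist (f (y j)) (y (j + 1)) ≤ dist (f (x j)) (x (j + 1)) + σ) :
    AvgPseudoOrbit f (δ + σ + 2 * D * θ) y := by
  classical
  have hstep : ∀ j, dist (f (y j)) (y (j + 1)) ≤ dist (f (x j)) (x (j + 1)) + σ +
      D * ((if x j ∈ B then 1 else 0) + (if x (j + 1) ∈ B then 1 else 0)) := fun j => by
    have hD0 : 0 ≤ D := dist_nonneg.trans (hD (x j) (x j))
    have := hD (f (y j)) (y (j + 1))
    by_cases hj : x j ∈ B <;> by_cases hj1 : x (j + 1) ∈ B <;>
      simp only [hj, hj1, if_true, if_false] <;>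
      first
        | linarith [hxy j hj hj1]
        | linarith [dist_nonneg (x := f (x j)) (y := x (j + 1))]
  obtain ⟨N, hN0, hxN⟩ := hx
  obtain ⟨N', hN'⟩ := hB
  refine ⟨max N N', lt_max_of_lt_left hN0, fun n hn k => ?_⟩
  have hn0 : (0 : ℝ) < n := by exact_mod_cast hN0.trans_le (le_of_max_le_left hn)
  have hsum := sum_le_sum fun i (_ : i ∈ range n) => hstep (i + k)
  simp only [sum_add_distrib, ← mul_sum, sum_boole, sum_const, card_range, nsmul_eq_mul] at hsum
  have h1 := hN' n (le_of_max_le_right hn) k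
  have h2 : ({i | i < n ∧ x (i + k + 1) ∈ B}.ncard : ℝ) ≤ θ * n := by
    simpa only [add_assoc] using hN' n (le_of_max_le_right hn) (k + 1)
  rw [ncard_setOf_lt_and_eq_card_filter] at h1 h2
  have h3 := (div_lt_iff₀ hn0).1 (hxN n (le_of_max_le_left hn) k)
  rw [div_lt_iff₀ hn0]
  nlinarith [dist_nonneg.trans (hD (x 0) (x 0))]

end PseudoOrbits

lemma Metric.exists_forall_mem_dist_lt_of_mem_thickening {X ι : Type*} [PseudoMetricSpace X]
    {A : Set X} (hA : A.Nonempty) (ρ : ℝ) (x : ι → X) :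
    ∃ y : ι → X, (∀ i, y i ∈ A) ∧ ∀ i, x i ∈ thickening ρ A → dist (x i) (y i) < ρ := by
  have : ∀ i, ∃ a ∈ A, x i ∈ thickening ρ A → dist (x i) a < ρ := fun i => by
    by_cases h : x i ∈ thickening ρ A
    · obtain ⟨a, ha, hd⟩ := mem_thickening_iff.1 h
      exact ⟨a, ha, fun _ => hd⟩
    · exact ⟨_, hA.some_mem, fun h' => absurd h' h⟩
  choose y hyA hy using this
  exact ⟨y, hyA, hy⟩

theorem exists_approx_mem_of_sparse_far_visits {X : Type*} [MetricSpace X] [CompactSpace X]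
    {f : X → X} (hf : Continuous f) (A : Set X) {ε : ℝ} (hε : 0 < ε) :
    ∃ ρ > 0, ∃ θ > 0, ∀ x : ℕ → X, AvgPseudoOrbit f (ε / 8) x →
      (∃ N, ∀ n ≥ N, ∀ k, ({i | i < n ∧ x (i + k) ∈ (thickening ρ A)ᶜ}.ncard : ℝ) ≤ θ * n) →
        ∃ y : ℕ → X, (∀ n, y n ∈ A) ∧ AvgPseudoOrbit f ε y ∧
          limsup (fun n : ℕ => ({i | i < n ∧ ε ≤ dist (x i) (y i)}.ncard : ℝ) / n) atTop < ε := by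
  obtain ⟨η, hη, hfη⟩ := Metric.uniformContinuous_iff.1
    (CompactSpace.uniformContinuous_of_continuous hf) (ε / 8) (by positivity)
  set D := diam (univ : Set X)
  have hD : ∀ a b : X, dist a b ≤ D := fun a b =>
    dist_le_diam_of_mem isCompact_univ.isBounded trivial trivial
  have hD0 : 0 ≤ D := diam_nonneg
  set ρ := min (ε / 8) η
  set θ := min (1 / 2) (ε / (16 * (D + 1)))
  have hDθ : 2 * D * θ ≤ ε / 8 := by
    calc 2 * D * θ ≤ 2 * D * (ε / (16 * (D + 1))) := by gcongr; exact min_le_right _ _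
      _ ≤ ε / 8 := by
        rw [mul_div_assoc', div_le_div_iff₀ (by positivity) (by norm_num)]
        nlinarith
  have hθε : θ < ε := (min_le_right _ _).trans_lt (div_lt_self hε (by linarith))
  refine ⟨ρ, by positivity, θ, by positivity, fun x hx hN => ?_⟩
  have hN0 : ∃ N, ∀ n ≥ N, ({i | i < n ∧ x i ∈ (thickening ρ A)ᶜ}.ncard : ℝ) ≤ θ * n :=
    let ⟨N, hN⟩ := hN
    ⟨N, fun n hn => by simpa using hN n hn 0⟩
  -- `θ < 1` forces some `x i` into the `ρ`-neighbourhood of `A`, so `A` is nonempty.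
  obtain ⟨i, hi⟩ := exists_not_of_ncard_le ((min_le_left _ _).trans_lt one_half_lt_one) hN0
  obtain ⟨y, hyA, hxy⟩ := exists_forall_mem_dist_lt_of_mem_thickening
    (thickening_nonempty_iff.1 ⟨_, notMem_compl_iff.1 hi⟩).2 ρ x
  refine ⟨y, hyA, ?_, (limsup_ncard_div_le (fun i hi => ?_) hN0).trans_lt hθε⟩
  · refine (hx.of_dist_le_off_sparse (B := (thickening ρ A)ᶜ) (σ := ε / 8 + ρ) hN hD
      (by positivity) fun j hj hj1 => ?_).mono ?_
    · have h1 := hxy j (notMem_compl_iff.1 hj)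
      have h2 := hxy (j + 1) (notMem_compl_iff.1 hj1)
      have h3 : dist (f (y j)) (f (x j)) < ε / 8 :=
        hfη ((dist_comm _ _).trans_lt (h1.trans_le (min_le_right _ _)))
      linarith [dist_triangle4 (f (y j)) (f (x j)) (x (j + 1)) (y (j + 1))]
    · linarith [min_le_left (ε / 8) η]
  · by_contra h
    linarith [hxy i (notMem_compl_iff.1 h), min_le_left (ε / 8) η]

theorem avgPseudoOrbit_approx_in_measureCenter_superset_general
    {X : Type*} [MetricSpace X] [CompactSpace X] [MeasurableSpace X] [BorelSpace X]
    (f : X → X) (hf : Continuous f)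
    (A : Set X)
    (hmc : measureCenter f ⊆ A) :
    ∀ ε : ℝ, 0 < ε → ∃ δ : ℝ, 0 < δ ∧ δ < ε ∧
      ∀ x : ℕ → X, AvgPseudoOrbit f δ x →
        ∃ y : ℕ → X, (∀ n : ℕ, y n ∈ A) ∧ AvgPseudoOrbit f ε y ∧
          limsup (fun n : ℕ =>
            (({i : ℕ | i < n ∧ ε ≤ dist (x i) (y i)}).ncard : ℝ) / n) atTop < ε := by
  intro ε hε
  obtain ⟨ρ, hρ, θ, hθ, happrox⟩ := exists_approx_mem_of_sparse_far_visits hf A hε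
  obtain ⟨δ, hδ, hvisits⟩ := exists_avgPseudoOrbit_ncard_visits_le hf
    isOpen_thickening.isClosed_compl
    (disjoint_compl_left_iff_subset.2 (hmc.trans (self_subset_thickening hρ A))) hθ
  refine ⟨min δ (ε / 8), by positivity, by linarith [min_le_right δ (ε / 8)], fun x hx => ?_⟩
  exact happrox x (hx.mono (min_le_right _ _)) (hvisits x (hx.mono (min_le_left _ _)))

/-- Average pseudo-orbits can be replaced, up to a small density
of errors, by average pseudo-orbits inside a closed invariant set containing
the measure center. -/
theorem avgPseudoOrbit_approx_in_measureCenter_superset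
    {X : Type*} [MetricSpace X] [CompactSpace X] [MeasurableSpace X] [BorelSpace X]
    (f : X → X) (hf : Continuous f)
    (A : Set X) (hA : IsClosed A) (hfA : Set.MapsTo f A A)
    (hmc : measureCenter f ⊆ A) :
    ∀ ε : ℝ, 0 < ε → ∃ δ : ℝ, 0 < δ ∧ δ < ε ∧
      ∀ x : ℕ → X, AvgPseudoOrbit f δ x →
        ∃ y : ℕ → X, (∀ n : ℕ, y n ∈ A) ∧ AvgPseudoOrbit f ε y ∧
          limsup (fun n : ℕ =>
            (({i : ℕ | i < n ∧ ε ≤ dist (x i) (y i)}).ncard : ℝ) / n) atTop < ε :=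
  avgPseudoOrbit_approx_in_measureCenter_superset_general f hf A hmc
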